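/- arXiv:2504.11865 — 2 statements merged into one kernel-verified Lean document; each statement's English description precedes it below -/
import Mathlib

section
/- For the Apéry polynomial f_n(x) = Σ_{k=0}^n C(n,k)^2 C(n+k,k) x^k, one has lim_{n→∞} f_n''(1)/(n^2 f_n(1)) = (3 − √5)/2. -/
/-!
The coefficients `a n k = C(n,k)² C(n+k,k)` satisfy
`a n (k+1) / a n k = (n-k)² (n+k+1) / (k+1)³ ≈ g (k/n)` with `g x = (1-x)² (1+x) / x³`,
and `g x - 1 = (1 - x - x²) / x³` changes sign exactly at `x = φ⁻¹`. So `k ↦ a n k` grows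
geometrically below `k = n/φ` and decays geometrically above it: the probability weights
`a n k / f_n(1)` concentrate at `k/n = φ⁻¹`, and their mean of the bounded quantity
`k(k-1)/n²`, which is `f_n''(1) / (n² f_n(1))`, tends to `φ⁻² = (3 - √5)/2`.
-/

open Polynomial

/-- The Apéry polynomial. -/
noncomputable def aperyPoly (n : ℕ) : Polynomial ℝ :=
  ∑ k ∈ Finset.range (n + 1),
    C (((n.choose k) ^ 2 * ((n + k).choose k) : ℕ) : ℝ) * X ^ k

open Finset Filter Topology Real goldenRatio

lemma sq_mul_le_sq_mul {a b c d : ℝ} (ha : 0 ≤ a) (hab : a ≤ b) (hc : 0 ≤ c) (hcd : c ≤ d) :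
    a ^ 2 * c ≤ b ^ 2 * d :=
  mul_le_mul (pow_le_pow_left₀ ha hab 2) hcd hc (sq_nonneg b)

lemma sum_filter_le_sum_filter_add_sum_filter {ι : Type*} {s : Finset ι} {p q r : ι → Prop}
    [DecidablePred p] [DecidablePred q] [DecidablePred r] {g : ι → ℝ} (hg : ∀ i ∈ s, 0 ≤ g i)
    (h : ∀ i ∈ s, p i → q i ∨ r i) :
    ∑ i ∈ s with p i, g i ≤ ∑ i ∈ s with q i, g i + ∑ i ∈ s with r i, g i := by
  simp only [sum_filter, ← sum_add_distrib]
  refine sum_le_sum fun i hi ↦ ?_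
  have := hg i hi
  by_cases hp : p i
  · rcases h i hi hp with hq | hr <;> split_ifs <;> linarith
  · rw [if_neg hp]
    split_ifs <;> linarith

lemma abs_sum_mul_div_sum_sub_le {ι : Type*} {s : Finset ι} {a f : ι → ℝ} {L M η : ℝ}
    (ha : ∀ i ∈ s, 0 ≤ a i) (hS : 0 < ∑ i ∈ s, a i) (hM : ∀ i ∈ s, |f i - L| ≤ M) (hη : 0 ≤ η) :
    |(∑ i ∈ s, f i * a i) / ∑ i ∈ s, a i - L|
      ≤ η + M * ((∑ i ∈ s with η ≤ |f i - L|, a i) / ∑ i ∈ s, a i) := by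
  have hpt : ∀ i ∈ s, |f i - L| * a i ≤ η * a i + M * (if η ≤ |f i - L| then a i else 0) := by
    intro i hi
    have hai := ha i hi
    split_ifs with hfar
    · nlinarith [hM i hi]
    · nlinarith
  have hdiff : (∑ i ∈ s, f i * a i) / ∑ i ∈ s, a i - L
      = (∑ i ∈ s, (f i - L) * a i) / ∑ i ∈ s, a i := by
    rw [eq_div_iff hS.ne', sub_mul, div_mul_cancel₀ _ hS.ne']
    simp only [sub_mul, sum_sub_distrib, mul_sum]
  rw [hdiff, abs_div, abs_of_pos hS, div_le_iff₀ hS]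
  calc |∑ i ∈ s, (f i - L) * a i|
      ≤ ∑ i ∈ s, |f i - L| * a i := by
        refine (abs_sum_le_sum_abs _ _).trans (le_of_eq (sum_congr rfl fun i hi ↦ ?_))
        rw [abs_mul, abs_of_nonneg (ha i hi)]
    _ ≤ ∑ i ∈ s, (η * a i + M * (if η ≤ |f i - L| then a i else 0)) := sum_le_sum hpt
    _ = _ := by
        rw [sum_add_distrib, ← mul_sum, ← mul_sum, ← sum_filter]
        field_simp

theorem tendsto_sum_mul_div_sum_of_concentration {α ι : Type*} {l : Filter α}
    {s : α → Finset ι} {a f : α → ι → ℝ} {L M : ℝ} (ha : ∀ x, ∀ i ∈ s x, 0 ≤ a x i)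
    (hS : ∀ x, 0 < ∑ i ∈ s x, a x i) (hM : ∀ x, ∀ i ∈ s x, |f x i - L| ≤ M)
    (hconc : ∀ ε > 0, Tendsto (fun x ↦ (∑ i ∈ s x with ε ≤ |f x i - L|, a x i) /
      ∑ i ∈ s x, a x i) l (𝓝 0)) :
    Tendsto (fun x ↦ (∑ i ∈ s x, f x i * a x i) / ∑ i ∈ s x, a x i) l (𝓝 L) := by
  refine Metric.tendsto_nhds.2 fun ε hε ↦ ?_
  have hlim := ((hconc (ε / 2) (half_pos hε)).const_mul M).const_add (ε / 2)
  rw [mul_zero, add_zero] at hlim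
  filter_upwards [hlim.eventually_lt_const (half_lt_self hε)] with x hx
  rw [Real.dist_eq]
  exact (abs_sum_mul_div_sum_sub_le (ha x) (hS x) (hM x) (half_pos hε).le).trans_lt hx

lemma tendsto_natCast_add_one_mul_rpow {ρ c : ℝ} (hρ0 : 0 < ρ) (hρ1 : ρ < 1) (hc : 0 < c) :
    Tendsto (fun n : ℕ ↦ ((n : ℝ) + 1) * ρ ^ (c * n - 1)) atTop (𝓝 0) := by
  have hσ0 : 0 ≤ ρ ^ c := Real.rpow_nonneg hρ0.le c
  have hσ1 : ρ ^ c < 1 := Real.rpow_lt_one hρ0.le hρ1 hc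
  have h := ((tendsto_self_mul_const_pow_of_lt_one hσ0 hσ1).add
    (tendsto_pow_atTop_nhds_zero_of_lt_one hσ0 hσ1)).const_mul ρ⁻¹
  rw [add_zero, mul_zero] at h
  refine h.congr fun n ↦ ?_
  rw [Real.rpow_sub hρ0, Real.rpow_one, Real.rpow_mul hρ0.le, Real.rpow_natCast]
  ring

lemma tendsto_sum_filter_div_sum_of_le_pow {a : ℕ → ℕ → ℝ} (ha : ∀ n k, 0 ≤ a n k)
    {p : ℕ → ℕ → Prop} [∀ n, DecidablePred (p n)] {ρ c : ℝ} (hρ0 : 0 < ρ) (hρ1 : ρ < 1)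
    (hc : 0 < c)
    (hle : ∀ n, ∀ k ≤ n, p n k →
      ∃ j : ℕ, c * n - 1 ≤ j ∧ a n k ≤ ρ ^ j * ∑ i ∈ range (n + 1), a n i) :
    Tendsto (fun n ↦ (∑ k ∈ range (n + 1) with p n k, a n k) / ∑ k ∈ range (n + 1), a n k)
      atTop (𝓝 0) := by
  refine squeeze_zero (fun n ↦ div_nonneg (sum_nonneg fun k _ ↦ ha n k)
    (sum_nonneg fun k _ ↦ ha n k)) (fun n ↦ ?_) (tendsto_natCast_add_one_mul_rpow hρ0 hρ1 hc)
  set S := ∑ i ∈ range (n + 1), a n i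
  have hterm : ∀ k ∈ (range (n + 1)).filter (p n), a n k ≤ ρ ^ (c * n - 1) * S := by
    intro k hk
    rw [mem_filter, mem_range] at hk
    obtain ⟨j, hj, hak⟩ := hle n k (Nat.lt_succ_iff.1 hk.1) hk.2
    refine hak.trans (mul_le_mul_of_nonneg_right ?_ (sum_nonneg fun i _ ↦ ha n i))
    rw [← Real.rpow_natCast]
    exact Real.rpow_le_rpow_of_exponent_ge hρ0 hρ1.le hj
  refine div_le_of_le_mul₀ (sum_nonneg fun i _ ↦ ha n i) (by positivity) ?_
  calc ∑ k ∈ range (n + 1) with p n k, a n k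
      ≤ ∑ k ∈ range (n + 1) with p n k, ρ ^ (c * n - 1) * S := sum_le_sum hterm
    _ ≤ ∑ k ∈ range (n + 1), ρ ^ (c * n - 1) * S :=
      sum_le_sum_of_subset_of_nonneg (filter_subset _ _) fun i _ _ ↦
        mul_nonneg (Real.rpow_nonneg hρ0.le _) (sum_nonneg fun i _ ↦ ha n i)
    _ = ((n : ℝ) + 1) * ρ ^ (c * n - 1) * S := by simp [mul_assoc]

lemma mul_sub_one_div_sq_mem_Icc {n k : ℕ} (hkn : k ≤ n) :
    (k : ℝ) * (k - 1) / n ^ 2 ∈ Set.Icc 0 1 := by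
  have hk : (k : ℝ) ≤ n := by exact_mod_cast hkn
  have hnum : 0 ≤ (k : ℝ) * (k - 1) := by
    rcases k with _ | k
    · simp
    · rw [Nat.cast_succ, add_sub_cancel_right]; positivity
  exact ⟨by positivity, div_le_one_of_le₀ (by nlinarith) (by positivity)⟩

lemma abs_mul_sub_one_div_sq_sub_sq_lt {n k : ℕ} (hn : 0 < n) (hkn : k ≤ n) {t ε : ℝ}
    (hsq : |((k : ℝ) / n) ^ 2 - t ^ 2| < ε / 2) (hn' : 1 / (n : ℝ) < ε / 2) :
    |(k : ℝ) * (k - 1) / n ^ 2 - t ^ 2| < ε := by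
  have hn0 : (0 : ℝ) < n := by exact_mod_cast hn
  have hk : (k : ℝ) ≤ n := by exact_mod_cast hkn
  have hsplit : (k : ℝ) * (k - 1) / n ^ 2 = ((k : ℝ) / n) ^ 2 - k / n ^ 2 := by
    field_simp
  have hsmall : (k : ℝ) / n ^ 2 ≤ 1 / n := by
    rw [div_le_div_iff₀ (by positivity) hn0]
    nlinarith
  have hnonneg : 0 ≤ (k : ℝ) / n ^ 2 := by positivity
  rw [hsplit]
  calc |((k : ℝ) / n) ^ 2 - k / n ^ 2 - t ^ 2|
      ≤ |((k : ℝ) / n) ^ 2 - t ^ 2| + |(k : ℝ) / n ^ 2| := by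
        rw [show ((k : ℝ) / n) ^ 2 - k / n ^ 2 - t ^ 2
          = (((k : ℝ) / n) ^ 2 - t ^ 2) - k / n ^ 2 by ring]
        exact abs_sub _ _
    _ < ε := by rw [abs_of_nonneg hnonneg]; linarith

lemma inv_goldenRatio_pos : 0 < φ⁻¹ := inv_pos.2 goldenRatio_pos

lemma inv_goldenRatio_lt_one : φ⁻¹ < 1 := inv_lt_one_of_one_lt₀ one_lt_goldenRatio

lemma one_sub_sub_sq_eq_mul (x : ℝ) : 1 - x - x ^ 2 = (φ⁻¹ - x) * (x + φ) := by
  have hinv : φ⁻¹ = φ - 1 := by rw [inv_goldenRatio, ← one_sub_goldenConj]; ring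
  rw [hinv]
  linear_combination -goldenRatio_sq

noncomputable def aperyCoeff (n k : ℕ) : ℝ := ((n.choose k ^ 2 * (n + k).choose k : ℕ) : ℝ)

lemma aperyCoeff_nonneg (n k : ℕ) : 0 ≤ aperyCoeff n k := Nat.cast_nonneg _

lemma aperyCoeff_pos {n k : ℕ} (hk : k ≤ n) : 0 < aperyCoeff n k := by
  have := Nat.choose_pos hk
  have := Nat.choose_pos (Nat.le_add_left k n)
  unfold aperyCoeff
  positivity

lemma aperyCoeff_le_sum {n k : ℕ} (hk : k ≤ n) :
    aperyCoeff n k ≤ ∑ i ∈ range (n + 1), aperyCoeff n i :=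
  single_le_sum (fun i _ ↦ aperyCoeff_nonneg n i) (mem_range.2 (Nat.lt_succ_of_le hk))

lemma aperyCoeff_sum_pos (n : ℕ) : 0 < ∑ k ∈ range (n + 1), aperyCoeff n k :=
  sum_pos (fun _ hk ↦ aperyCoeff_pos (Nat.lt_succ_iff.1 (mem_range.1 hk))) nonempty_range_add_one

lemma aperyCoeff_succ {n k : ℕ} (hk : k ≤ n) :
    aperyCoeff n (k + 1)
      = ((n : ℝ) - k) ^ 2 * ((n : ℝ) + k + 1) / ((k : ℝ) + 1) ^ 3 * aperyCoeff n k := by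
  have hnat : n.choose (k + 1) ^ 2 * (n + (k + 1)).choose (k + 1) * (k + 1) ^ 3
      = (n - k) ^ 2 * (n + k + 1) * (n.choose k ^ 2 * (n + k).choose k) := by
    have h₁ := Nat.choose_succ_right_eq n k
    have h₂ := Nat.add_one_mul_choose_eq (n + k) k
    rw [← add_assoc]
    calc _ = (n.choose (k + 1) * (k + 1)) ^ 2 * ((n + k + 1).choose (k + 1) * (k + 1)) := by ring
      _ = _ := by rw [h₁, ← h₂]; ring
  have := congrArg (Nat.cast : ℕ → ℝ) hnat
  push_cast [Nat.cast_sub hk] at this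
  rw [div_mul_eq_mul_div, eq_div_iff (by positivity), aperyCoeff, aperyCoeff]
  push_cast
  exact this

/-- The limit of `aperyCoeff n (k + 1) / aperyCoeff n k` as `k / n → x`. -/
noncomputable def aperyRatio (x : ℝ) : ℝ := (1 - x) ^ 2 * (1 + x) / x ^ 3

lemma aperyRatio_pos {x : ℝ} (h0 : 0 < x) (h1 : x < 1) : 0 < aperyRatio x := by
  have : 0 < 1 - x := by linarith
  unfold aperyRatio
  positivity

lemma aperyRatio_sub_one {x : ℝ} (hx : x ≠ 0) :
    aperyRatio x - 1 = (φ⁻¹ - x) * (x + φ) / x ^ 3 := by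
  rw [← one_sub_sub_sq_eq_mul, aperyRatio]
  field_simp
  ring

lemma aperyRatio_lt_one {x : ℝ} (hx : φ⁻¹ < x) : aperyRatio x < 1 := by
  have hx0 : 0 < x := inv_goldenRatio_pos.trans hx
  have : (φ⁻¹ - x) * (x + φ) / x ^ 3 < 0 :=
    div_neg_of_neg_of_pos (mul_neg_of_neg_of_pos (by linarith) (by linarith [goldenRatio_pos]))
      (by positivity)
  linarith [aperyRatio_sub_one hx0.ne']

lemma one_lt_aperyRatio {x : ℝ} (hx0 : 0 < x) (hx : x < φ⁻¹) : 1 < aperyRatio x := by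
  have : 0 < (φ⁻¹ - x) * (x + φ) / x ^ 3 := by
    have := goldenRatio_pos
    exact div_pos (mul_pos (by linarith) (by linarith)) (by positivity)
  linarith [aperyRatio_sub_one hx0.ne']

lemma aperyRatio_mul_cube {w : ℝ} (hw0 : 0 < w) (y : ℝ) :
    w ^ 3 * (aperyRatio w * (y + 1) ^ 3) = ((1 - w) * (y + 1)) ^ 2 * ((1 + w) * (y + 1)) := by
  rw [aperyRatio]
  field_simp

lemma sq_sub_mul_le_aperyRatio_mul {w x y : ℝ} (hw0 : 0 < w) (hw1 : w < 1) (hwy : w * x ≤ y)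
    (hyx : y ≤ x) : (x - y) ^ 2 * (x + y + 1) ≤ aperyRatio w * (y + 1) ^ 3 := by
  have hx : 0 ≤ x := by nlinarith
  have hy : 0 ≤ y := by nlinarith
  refine le_of_mul_le_mul_left ?_ (pow_pos hw0 3)
  rw [aperyRatio_mul_cube hw0,
    show w ^ 3 * ((x - y) ^ 2 * (x + y + 1)) = (w * (x - y)) ^ 2 * (w * (x + y + 1)) by ring]
  apply sq_mul_le_sq_mul <;> nlinarith

lemma aperyRatio_mul_le_sq_sub_mul {w x y : ℝ} (hw0 : 0 < w) (hw1 : w < 1) (hy : 0 ≤ y)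
    (hyw : y + 1 ≤ w * x) : aperyRatio w * (y + 1) ^ 3 ≤ (x - y) ^ 2 * (x + y + 1) := by
  refine le_of_mul_le_mul_left ?_ (pow_pos hw0 3)
  rw [aperyRatio_mul_cube hw0,
    show w ^ 3 * ((x - y) ^ 2 * (x + y + 1)) = (w * (x - y)) ^ 2 * (w * (x + y + 1)) by ring]
  apply sq_mul_le_sq_mul <;> nlinarith

lemma aperyCoeff_succ_le {w : ℝ} (hw0 : 0 < w) (hw1 : w < 1) {n k : ℕ} (hk : w * n ≤ k)
    (hkn : k ≤ n) : aperyCoeff n (k + 1) ≤ aperyRatio w * aperyCoeff n k := by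
  rw [aperyCoeff_succ hkn]
  refine mul_le_mul_of_nonneg_right ((div_le_iff₀ (by positivity)).2 ?_) (aperyCoeff_nonneg n k)
  exact sq_sub_mul_le_aperyRatio_mul hw0 hw1 hk (by exact_mod_cast hkn)

lemma aperyRatio_mul_le_aperyCoeff_succ {w : ℝ} (hw0 : 0 < w) (hw1 : w < 1) {n k : ℕ}
    (hk : (k : ℝ) + 1 ≤ w * n) : aperyRatio w * aperyCoeff n k ≤ aperyCoeff n (k + 1) := by
  have hkn : k ≤ n := by
    have : (k : ℝ) ≤ n := by nlinarith [(n.cast_nonneg : (0 : ℝ) ≤ n)]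
    exact_mod_cast this
  rw [aperyCoeff_succ hkn]
  refine mul_le_mul_of_nonneg_right ((le_div_iff₀ (by positivity)).2 ?_) (aperyCoeff_nonneg n k)
  exact aperyRatio_mul_le_sq_sub_mul hw0 hw1 k.cast_nonneg hk

lemma aperyCoeff_le_pow_mul {w : ℝ} (hw0 : 0 < w) (hw1 : w < 1) {n K k : ℕ} (hK : w * n ≤ K)
    (hKk : K ≤ k) (hkn : k ≤ n) : aperyCoeff n k ≤ aperyRatio w ^ (k - K) * aperyCoeff n K := by
  obtain ⟨j, rfl⟩ := Nat.exists_eq_add_of_le hKk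
  rw [Nat.add_sub_cancel_left]
  refine le_geom (u := fun i ↦ aperyCoeff n (K + i)) (aperyRatio_pos hw0 hw1).le j fun i hi ↦ ?_
  exact aperyCoeff_succ_le (k := K + i) hw0 hw1 (hK.trans (by simp)) (by omega)

lemma aperyCoeff_le_inv_pow_mul {w : ℝ} (hw0 : 0 < w) (hw1 : w < 1) {n K k : ℕ} (hkK : k ≤ K)
    (hK : K ≤ w * n) : aperyCoeff n k ≤ (aperyRatio w)⁻¹ ^ (K - k) * aperyCoeff n K := by
  obtain ⟨j, rfl⟩ := Nat.exists_eq_add_of_le hkK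
  rw [Nat.add_sub_cancel_left]
  have := le_geom (u := fun i ↦ aperyCoeff n (k + j - i)) (inv_nonneg.2 (aperyRatio_pos hw0 hw1).le)
    j fun i hi ↦ ?_
  · simpa using this
  rw [le_inv_mul_iff₀ (aperyRatio_pos hw0 hw1), show k + j - i = k + j - (i + 1) + 1 by omega]
  refine aperyRatio_mul_le_aperyCoeff_succ hw0 hw1 (le_trans ?_ hK)
  exact_mod_cast (show k + j - (i + 1) + 1 ≤ k + j by omega)

lemma tendsto_aperyCoeff_upper_tail {v : ℝ} (hv : φ⁻¹ < v) :
    Tendsto (fun n : ℕ ↦ (∑ k ∈ range (n + 1) with v * n ≤ ((k : ℕ) : ℝ), aperyCoeff n k) /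
      ∑ k ∈ range (n + 1), aperyCoeff n k) atTop (𝓝 0) := by
  set w := (φ⁻¹ + min v 1) / 2 with hw
  have hφw : φ⁻¹ < w := by have := lt_min hv inv_goldenRatio_lt_one; linarith [hw]
  have hw1 : w < 1 := by have := min_le_right v 1; linarith [inv_goldenRatio_lt_one, hw]
  have hwv : w < v := by have := min_le_left v 1; linarith [hw]
  have hw0 : 0 < w := inv_goldenRatio_pos.trans hφw
  refine tendsto_sum_filter_div_sum_of_le_pow aperyCoeff_nonneg (aperyRatio_pos hw0 hw1)
    (aperyRatio_lt_one hφw) (sub_pos.2 hwv) fun n k hkn hk ↦ ?_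
  have hwn : w * n ≤ v * n := by gcongr
  have hKk : ⌈w * n⌉₊ ≤ k := Nat.ceil_le.2 (hwn.trans hk)
  refine ⟨k - ⌈w * n⌉₊, ?_, (aperyCoeff_le_pow_mul hw0 hw1 (Nat.le_ceil _) hKk hkn).trans
    (mul_le_mul_of_nonneg_left (aperyCoeff_le_sum (hKk.trans hkn))
      (pow_nonneg (aperyRatio_pos hw0 hw1).le _))⟩
  have := Nat.ceil_lt_add_one (by positivity : 0 ≤ w * n)
  push_cast [Nat.cast_sub hKk]
  linarith

lemma tendsto_aperyCoeff_lower_tail {u : ℝ} (hu : u < φ⁻¹) :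
    Tendsto (fun n : ℕ ↦ (∑ k ∈ range (n + 1) with ((k : ℕ) : ℝ) ≤ u * n, aperyCoeff n k) /
      ∑ k ∈ range (n + 1), aperyCoeff n k) atTop (𝓝 0) := by
  set w := (max u 0 + φ⁻¹) / 2 with hw
  have hwφ : w < φ⁻¹ := by have := max_lt hu inv_goldenRatio_pos; linarith [hw]
  have huw : u < w := by have := le_max_left u 0; linarith [hw]
  have hw0 : 0 < w := by have := le_max_right u 0; linarith [inv_goldenRatio_pos, hw]
  have hw1 : w < 1 := hwφ.trans inv_goldenRatio_lt_one
  have hρ := one_lt_aperyRatio hw0 hwφ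
  refine tendsto_sum_filter_div_sum_of_le_pow aperyCoeff_nonneg (inv_pos.2 (zero_lt_one.trans hρ))
    (inv_lt_one_of_one_lt₀ hρ) (sub_pos.2 huw) fun n k hkn hk ↦ ?_
  have hwn : 0 ≤ w * n := by positivity
  have hkK : k ≤ ⌊w * n⌋₊ := Nat.le_floor (hk.trans (by gcongr))
  have hKn : ⌊w * n⌋₊ ≤ n := Nat.floor_le_of_le (by nlinarith)
  refine ⟨⌊w * n⌋₊ - k, ?_, (aperyCoeff_le_inv_pow_mul hw0 hw1 hkK (Nat.floor_le hwn)).trans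
    (mul_le_mul_of_nonneg_left (aperyCoeff_le_sum hKn) (by positivity))⟩
  have := Nat.sub_one_lt_floor (w * n)
  push_cast [Nat.cast_sub hkK]
  linarith

lemma tendsto_aperyCoeff_sum_far_div_sum {ε : ℝ} (hε : 0 < ε) :
    Tendsto (fun n : ℕ ↦
      (∑ k ∈ range (n + 1) with ε ≤ |((k : ℕ) : ℝ) * (k - 1) / n ^ 2 - φ⁻¹ ^ 2|, aperyCoeff n k) /
        ∑ k ∈ range (n + 1), aperyCoeff n k) atTop (𝓝 0) := by
  have hnear : ∀ᶠ x in 𝓝 φ⁻¹, |x ^ 2 - φ⁻¹ ^ 2| < ε / 2 :=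
    Metric.tendsto_nhds.1 ((continuous_pow 2).tendsto φ⁻¹) _ (half_pos hε)
  obtain ⟨u, v, ⟨hu, hv⟩, huv⟩ := mem_nhds_iff_exists_Ioo_subset.1 hnear
  have htails := (tendsto_aperyCoeff_lower_tail hu).add (tendsto_aperyCoeff_upper_tail hv)
  rw [add_zero] at htails
  refine squeeze_zero' (Eventually.of_forall fun n ↦ div_nonneg
    (sum_nonneg fun k _ ↦ aperyCoeff_nonneg n k) (aperyCoeff_sum_pos n).le) ?_ htails
  filter_upwards [eventually_gt_atTop 0,
    tendsto_one_div_atTop_nhds_zero_nat.eventually_lt_const (half_pos hε)] with n hn hn'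
  rw [← add_div]
  refine div_le_div_of_nonneg_right (sum_filter_le_sum_filter_add_sum_filter
    (fun k _ ↦ aperyCoeff_nonneg n k) fun k hk hfar ↦ ?_) (aperyCoeff_sum_pos n).le
  have hn0 : (0 : ℝ) < n := by exact_mod_cast hn
  by_contra! hmid
  have hmem : (k : ℝ) / n ∈ Set.Ioo u v :=
    ⟨(lt_div_iff₀ hn0).2 hmid.1, (div_lt_iff₀ hn0).2 hmid.2⟩
  exact (abs_mul_sub_one_div_sq_sub_sq_lt hn (Nat.lt_succ_iff.1 (mem_range.1 hk)) (huv hmem)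
    hn').not_ge hfar

lemma aperyPoly_eval_one (n : ℕ) :
    (aperyPoly n).eval 1 = ∑ k ∈ range (n + 1), aperyCoeff n k := by
  simp [aperyPoly, eval_finsetSum, aperyCoeff]

lemma aperyPoly_derivative_derivative_eval_one (n : ℕ) :
    (derivative (derivative (aperyPoly n))).eval 1
      = ∑ k ∈ range (n + 1), (k : ℝ) * (k - 1) * aperyCoeff n k := by
  simp only [aperyPoly, map_sum, eval_finsetSum, derivative_C_mul, derivative_X_pow]
  refine sum_congr rfl fun k _ ↦ ?_
  rcases k with _ | k
  · simp
  · simp [aperyCoeff]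
    ring

theorem apery_second_moment_limit :
    Filter.Tendsto
      (fun n : ℕ =>
        (derivative (derivative (aperyPoly n))).eval 1 / ((n : ℝ) ^ 2 * (aperyPoly n).eval 1))
      Filter.atTop (nhds ((3 - Real.sqrt 5) / 2)) := by
  have hlim : (3 - √5) / 2 = φ⁻¹ ^ 2 := by
    rw [inv_goldenRatio, neg_sq, goldenConj_sq]
    ring
  have hbounded : ∀ n, ∀ k ∈ range (n + 1), |(k : ℝ) * (k - 1) / n ^ 2 - φ⁻¹ ^ 2| ≤ 1 := by
    intro n k hk
    have ⟨h₀, h₁⟩ := mul_sub_one_div_sq_mem_Icc (Nat.lt_succ_iff.1 (mem_range.1 hk))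
    have : φ⁻¹ ^ 2 < 1 := pow_lt_one₀ inv_goldenRatio_pos.le inv_goldenRatio_lt_one two_ne_zero
    exact abs_sub_le_iff.2 ⟨by linarith [sq_nonneg φ⁻¹], by linarith⟩
  rw [hlim]
  refine (tendsto_sum_mul_div_sum_of_concentration (fun n k _ ↦ aperyCoeff_nonneg n k)
    aperyCoeff_sum_pos hbounded fun ε ↦ tendsto_aperyCoeff_sum_far_div_sum).congr fun n ↦ ?_
  rw [aperyPoly_derivative_derivative_eval_one, aperyPoly_eval_one, ← div_div]
  congr 1
  rw [sum_div]
  exact sum_congr rfl fun k _ ↦ by ring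
end

section
/- For the Franel polynomial g_n(x) = Σ_{k=0}^n C(n,k)^3 x^k, the variance σ_n^2 = g_n''(1)/g_n(1) + μ_n − μ_n^2, with μ_n = g_n'(1)/g_n(1) = n/2, satisfies lim_{n→∞} σ_n^2 / n = 1/12. -/
open Finset Filter Topology

/-!
By the symmetry `k ↦ n - k` the mean is `n / 2`, and the same symmetry applied to `k ^ 3`, together
with `k * C(n, k) = n * C(n - 1, k - 1)`, gives `∑ k² C(n, k)³ = n² (2/3 f(n-1) + 1/6 f(n))` for the
Franel numbers `f n = ∑ C(n, k)³`. Hence `σ² / n = 2/3 n f(n-1) / f(n) - n / 12`, and it remains to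
show `f(n-1) / f(n) = (n + 1) / (8 n) + O(1 / n²)`. This follows by induction from Franel's
recurrence `(n+1)² f(n+1) = (7n² + 7n + 2) f(n) + 8n² f(n-1)`: it makes `f(n) / f(n+1)` a decreasing
function of `f(n-1) / f(n)`, so a lower bound at one step gives an upper bound at the next and
vice versa.
-/

noncomputable def franel (n : ℕ) : ℝ := ∑ k ∈ range (n + 1), (n.choose k : ℝ) ^ 3

noncomputable def franelMoment (j n : ℕ) : ℝ :=
  ∑ k ∈ range (n + 1), (k : ℝ) ^ j * (n.choose k : ℝ) ^ 3

theorem franel_pos (n : ℕ) : 0 < franel n :=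
  sum_pos' (fun _ _ => by positivity) ⟨0, by simp, by simp⟩

theorem sum_range_mul_choose_pow_reflect (g : ℝ → ℝ) (n p : ℕ) :
    ∑ k ∈ range (n + 1), g (n - k) * (n.choose k : ℝ) ^ p =
      ∑ k ∈ range (n + 1), g k * (n.choose k : ℝ) ^ p := by
  rw [← sum_range_reflect]
  refine sum_congr rfl fun k hk => ?_
  have hk : k ≤ n := Nat.lt_succ_iff.mp (mem_range.mp hk)
  rw [Nat.add_sub_cancel, Nat.choose_symm hk, Nat.cast_sub hk, sub_sub_cancel]

theorem franelMoment_one (n : ℕ) : franelMoment 1 n = n / 2 * franel n := by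
  have h := sum_range_mul_choose_pow_reflect id n 3
  simp only [id, sub_mul, sum_sub_distrib, ← mul_sum] at h
  simp only [franelMoment, franel, pow_one]
  linarith

theorem franelMoment_three_succ (n : ℕ) :
    franelMoment 3 (n + 1) = ((n : ℝ) + 1) ^ 3 * franel n := by
  rw [franelMoment, sum_range_succ', franel, mul_sum]
  refine (add_eq_left.mpr (by simp)).trans (sum_congr rfl fun k _ => ?_)
  have h : ((n : ℝ) + 1) * n.choose k = (n + 1).choose (k + 1) * ((k : ℝ) + 1) := by
    exact_mod_cast Nat.add_one_mul_choose_eq n k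
  rw [← mul_pow, ← mul_pow, h]
  push_cast
  ring

theorem franelMoment_two_succ (n : ℕ) :
    franelMoment 2 (n + 1) = ((n : ℝ) + 1) ^ 2 * (2 / 3 * franel n + 1 / 6 * franel (n + 1)) := by
  set N : ℝ := (n : ℝ) + 1
  have hreflect :
      franelMoment 3 (n + 1) = ∑ k ∈ range (n + 2), (N - k) ^ 3 * ((n + 1).choose k : ℝ) ^ 3 := by
    rw [franelMoment, ← sum_range_mul_choose_pow_reflect (fun x => x ^ 3)]
    push_cast
    rfl
  have hexpand : ∑ k ∈ range (n + 2), (N - k) ^ 3 * ((n + 1).choose k : ℝ) ^ 3 =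
      N ^ 3 * franel (n + 1) - 3 * N ^ 2 * franelMoment 1 (n + 1) + 3 * N * franelMoment 2 (n + 1) -
        franelMoment 3 (n + 1) := by
    simp only [franelMoment, franel, mul_sum, ← sum_sub_distrib, ← sum_add_distrib]
    exact sum_congr rfl fun k _ => by ring
  rw [hexpand, franelMoment_one, franelMoment_three_succ] at hreflect
  have hN : 3 * N ≠ 0 := by positivity
  apply mul_left_cancel₀ hN
  push_cast at hreflect
  linear_combination -hreflect

-- Found by Zeilberger's algorithm for the summand `C(n, k)³`.
noncomputable def franelCertificatePoly (N K : ℝ) : ℝ :=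
  4 * K ^ 3 - 6 * (3 * N + 2) * K ^ 2 + 3 * (9 * N ^ 2 + 13 * N + 4) * K -
    (14 * N ^ 3 + 32 * N ^ 2 + 22 * N + 4)

noncomputable def franelCertificate (m : ℕ) : ℕ → ℝ
  | 0 => 0
  | k + 1 => ((m + 1).choose k : ℝ) ^ 3 * franelCertificatePoly (m + 1) (k + 1)

theorem franelCertificate_succ_sub (m k : ℕ) (hk : k ≤ m + 2) :
    franelCertificate m (k + 1) - franelCertificate m k =
      ((m : ℝ) + 1) * (((m : ℝ) + 2) ^ 2 * ((m + 2).choose k : ℝ) ^ 3 -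
        (7 * (m : ℝ) ^ 2 + 21 * m + 16) * ((m + 1).choose k : ℝ) ^ 3 -
          8 * ((m : ℝ) + 1) ^ 2 * (m.choose k : ℝ) ^ 3) := by
  rcases k with _ | j
  · simp [franelCertificate, franelCertificatePoly]
    ring
  obtain hj | rfl : j ≤ m ∨ j = m + 1 := by omega
  · -- Writing `m = j + i` makes the three neighbours of `C(j + i + 1, j + 1)` subtraction-free
    -- rational multiples of it; clearing the denominator `(i + 1)³` leaves a polynomial identity.
    obtain ⟨i, rfl⟩ := Nat.exists_eq_add_of_le hj
    have hrow_succ : ((j + i + 1).choose (j + 1) : ℝ) * ((j : ℝ) + i + 2) =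
        ((j + i + 2).choose (j + 1) : ℝ) * ((i : ℝ) + 1) := by
      have h := Nat.choose_mul_succ_eq (j + i + 1) (j + 1)
      rw [show j + i + 1 + 1 - (j + 1) = i + 1 by omega] at h
      exact_mod_cast h
    have hrow_pred : ((j + i).choose (j + 1) : ℝ) * ((j : ℝ) + i + 1) =
        ((j + i + 1).choose (j + 1) : ℝ) * i := by
      have h := Nat.choose_mul_succ_eq (j + i) (j + 1)
      rw [show j + i + 1 - (j + 1) = i by omega] at h
      exact_mod_cast h
    have hcol_pred : ((j + i + 1).choose (j + 1) : ℝ) * ((j : ℝ) + 1) =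
        ((j + i + 1).choose j : ℝ) * ((i : ℝ) + 1) := by
      have h := Nat.choose_succ_right_eq (j + i + 1) j
      rw [show j + i + 1 - j = i + 1 by omega] at h
      exact_mod_cast h
    simp only [franelCertificate]
    push_cast
    have hi : ((i : ℝ) + 1) ^ 3 ≠ 0 := by positivity
    apply mul_left_cancel₀ hi
    linear_combination (norm := (simp only [franelCertificatePoly]; ring1))
      ((j : ℝ) + i + 1) * ((j : ℝ) + i + 2) ^ 2 * congrArg (· ^ 3) hrow_succ +
      8 * ((i : ℝ) + 1) ^ 3 * congrArg (· ^ 3) hrow_pred +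
      franelCertificatePoly ((j : ℝ) + i + 1) ((j : ℝ) + 1) * congrArg (· ^ 3) hcol_pred
  · have h2 : m.choose (m + 2) = 0 := Nat.choose_eq_zero_of_lt (by omega)
    simp [franelCertificate, franelCertificatePoly, h2]
    ring

theorem sum_range_choose_pow_eq_franel {n N : ℕ} (h : n + 1 ≤ N) :
    ∑ k ∈ range N, (n.choose k : ℝ) ^ 3 = franel n := by
  refine (sum_subset (range_subset_range.2 h) fun k hkN hkn => ?_).symm
  rw [Nat.choose_eq_zero_of_lt (by simpa using hkn)]
  simp

theorem franel_recurrence (m : ℕ) :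
    ((m : ℝ) + 2) ^ 2 * franel (m + 2) =
      (7 * (m : ℝ) ^ 2 + 21 * m + 16) * franel (m + 1) + 8 * ((m : ℝ) + 1) ^ 2 * franel m := by
  have htel : ∑ k ∈ range (m + 3), (franelCertificate m (k + 1) - franelCertificate m k) = 0 := by
    rw [sum_range_sub]
    simp [franelCertificate]
  rw [sum_congr rfl fun k hk =>
      franelCertificate_succ_sub m k (by simpa [Nat.lt_succ_iff] using hk), ← mul_sum] at htel
  simp only [sum_sub_distrib, ← mul_sum, sum_range_choose_pow_eq_franel (by omega : m + 1 ≤ m + 3),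
    sum_range_choose_pow_eq_franel (by omega : m + 2 ≤ m + 3),
    sum_range_choose_pow_eq_franel (by omega : m + 3 ≤ m + 3)] at htel
  have hm : (m : ℝ) + 1 ≠ 0 := by positivity
  linear_combination (mul_eq_zero.1 htel).resolve_left hm

theorem franel_ratio_succ (m : ℕ) :
    franel (m + 1) / franel (m + 2) =
      ((m : ℝ) + 2) ^ 2 /
        (7 * (m : ℝ) ^ 2 + 21 * m + 16 + 8 * ((m : ℝ) + 1) ^ 2 * (franel m / franel (m + 1))) := by
  have h0 := franel_pos m
  have h1 := franel_pos (m + 1)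
  have h2 := franel_pos (m + 2)
  rw [div_eq_div_iff h2.ne' (by positivity)]
  field_simp
  linear_combination -franel_recurrence m

theorem franel_ratio_bounds (m : ℕ) :
    ((m : ℝ) + 2) / (8 * ((m : ℝ) + 1)) ≤ franel m / franel (m + 1) ∧
      franel m / franel (m + 1) ≤
        ((m : ℝ) + 2) / (8 * ((m : ℝ) + 1)) + 1 / (4 * ((m : ℝ) + 1) ^ 2) := by
  induction m with
  | zero => norm_num [franel, sum_range_succ]
  | succ m ih =>
    obtain ⟨hlower, hupper⟩ := ih
    have h0 := franel_pos m
    have h1 := franel_pos (m + 1)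
    rw [franel_ratio_succ]
    push_cast
    set x : ℝ := (m : ℝ)
    have hx : 0 ≤ x := m.cast_nonneg
    have hden_lower : 7 * x ^ 2 + 21 * x + 16 + 8 * (x + 1) ^ 2 * ((x + 2) / (8 * (x + 1))) =
        2 * (2 * x + 3) ^ 2 := by
      field_simp
      ring
    have hden_upper : 7 * x ^ 2 + 21 * x + 16 +
        8 * (x + 1) ^ 2 * ((x + 2) / (8 * (x + 1)) + 1 / (4 * (x + 1) ^ 2)) =
          4 * (2 * x ^ 2 + 6 * x + 5) := by
      field_simp
      ring
    constructor
    · calc (x + 1 + 2) / (8 * (x + 1 + 1))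
          ≤ (x + 2) ^ 2 / (4 * (2 * x ^ 2 + 6 * x + 5)) := by
            rw [div_le_div_iff₀ (by positivity) (by positivity)]
            nlinarith
        _ = _ := by rw [← hden_upper]
        _ ≤ _ := by gcongr
    · calc _ ≤ (x + 2) ^ 2 / (7 * x ^ 2 + 21 * x + 16 + 8 * (x + 1) ^ 2 *
              ((x + 2) / (8 * (x + 1)))) := by gcongr
        _ = (x + 2) ^ 2 / (2 * (2 * x + 3) ^ 2) := by rw [hden_lower]
        _ ≤ _ := by
            rw [div_add_div _ _ (by positivity) (by positivity),
              div_le_div_iff₀ (by positivity) (by positivity)]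
            nlinarith

noncomputable def franelVariance (n : ℕ) : ℝ :=
  (∑ k ∈ range (n + 1), (k : ℝ) * (k - 1) * (n.choose k : ℝ) ^ 3) /
      (∑ k ∈ range (n + 1), (n.choose k : ℝ) ^ 3) +
    (∑ k ∈ range (n + 1), (k : ℝ) * (n.choose k : ℝ) ^ 3) /
      (∑ k ∈ range (n + 1), (n.choose k : ℝ) ^ 3) -
    ((∑ k ∈ range (n + 1), (k : ℝ) * (n.choose k : ℝ) ^ 3) /
      (∑ k ∈ range (n + 1), (n.choose k : ℝ) ^ 3)) ^ 2

theorem franelVariance_eq (n : ℕ) :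
    franelVariance n = franelMoment 2 n / franel n - (franelMoment 1 n / franel n) ^ 2 := by
  have hfactorial : ∑ k ∈ range (n + 1), (k : ℝ) * (k - 1) * (n.choose k : ℝ) ^ 3 =
      franelMoment 2 n - franelMoment 1 n := by
    simp only [franelMoment, ← sum_sub_distrib]
    exact sum_congr rfl fun k _ => by ring
  have hmean : ∑ k ∈ range (n + 1), (k : ℝ) * (n.choose k : ℝ) ^ 3 = franelMoment 1 n := by
    simp [franelMoment]
  rw [franelVariance, hfactorial, hmean, ← franel]
  ring

theorem franelVariance_succ_div (m : ℕ) :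
    franelVariance (m + 1) / (m + 1 : ℕ) =
      2 / 3 * ((m : ℝ) + 1) * (franel m / franel (m + 1)) - ((m : ℝ) + 1) / 12 := by
  have h1 := (franel_pos (m + 1)).ne'
  rw [franelVariance_eq, franelMoment_one, franelMoment_two_succ]
  push_cast
  field_simp
  ring

theorem franelVariance_succ_div_bounds (m : ℕ) :
    1 / 12 ≤ franelVariance (m + 1) / (m + 1 : ℕ) ∧
      franelVariance (m + 1) / (m + 1 : ℕ) ≤ 1 / 12 + 1 / 6 * (1 / ((m : ℝ) + 1)) := by
  obtain ⟨hlower, hupper⟩ := franel_ratio_bounds m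
  rw [franelVariance_succ_div]
  set x : ℝ := (m : ℝ)
  set r := franel m / franel (m + 1)
  have hx : 0 ≤ x := m.cast_nonneg
  have hlower' : (x + 2) / 12 ≤ 2 / 3 * (x + 1) * r :=
    calc (x + 2) / 12 = 2 / 3 * (x + 1) * ((x + 2) / (8 * (x + 1))) := by field_simp; ring
      _ ≤ _ := by gcongr
  have hupper' : 2 / 3 * (x + 1) * r ≤ (x + 2) / 12 + 1 / 6 * (1 / (x + 1)) :=
    calc _ ≤ 2 / 3 * (x + 1) * ((x + 2) / (8 * (x + 1)) + 1 / (4 * (x + 1) ^ 2)) := by gcongr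
      _ = _ := by field_simp; ring
  constructor <;> linarith

theorem franel_variance_limit :
    Filter.Tendsto
      (fun n : ℕ =>
        (((∑ k ∈ Finset.range (n + 1), (k : ℝ) * (k - 1) * ((n.choose k : ℕ) : ℝ) ^ 3) /
            (∑ k ∈ Finset.range (n + 1), ((n.choose k : ℕ) : ℝ) ^ 3)) +
          ((∑ k ∈ Finset.range (n + 1), (k : ℝ) * ((n.choose k : ℕ) : ℝ) ^ 3) /
            (∑ k ∈ Finset.range (n + 1), ((n.choose k : ℕ) : ℝ) ^ 3)) -
          ((∑ k ∈ Finset.range (n + 1), (k : ℝ) * ((n.choose k : ℕ) : ℝ) ^ 3) /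
            (∑ k ∈ Finset.range (n + 1), ((n.choose k : ℕ) : ℝ) ^ 3)) ^ 2) / (n : ℝ))
      Filter.atTop (nhds (1 / 12)) := by
  show Tendsto (fun n : ℕ => franelVariance n / n) atTop (𝓝 (1 / 12))
  rw [← tendsto_add_atTop_iff_nat 1]
  have hupper : Tendsto (fun m : ℕ => 1 / 12 + 1 / 6 * (1 / ((m : ℝ) + 1))) atTop (𝓝 (1 / 12)) := by
    have h := ((tendsto_one_div_add_atTop_nhds_zero_nat (𝕜 := ℝ)).const_mul (1 / 6)).const_add
      (1 / 12)
    simpa using h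
  exact tendsto_of_tendsto_of_tendsto_of_le_of_le tendsto_const_nhds hupper
    (fun m => (franelVariance_succ_div_bounds m).1) fun m => (franelVariance_succ_div_bounds m).2
end
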